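/- arXiv:2304.13555 — 4 statements merged into one kernel-verified Lean document; each statement's English description precedes it below -/
import Mathlib

section
/- Let C be an n×n complex matrix such that C·Cᵀ has n distinct eigenvalues. Then rank(C·Cᵀ) = rank(C). -/
/-!
Distinct eigenvalues make `0` at most a simple root of the characteristic polynomial of `C Cᵀ`,
and geometric multiplicity is bounded by algebraic multiplicity, so `C Cᵀ` has nullity at most
one. If `C` is invertible, `rank (C Cᵀ) = rank Cᵀ = rank C`; otherwise
`rank C ≤ n - 1 ≤ rank (C Cᵀ) ≤ rank C`.
-/

open Matrix Polynomial Module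

theorem Polynomial.nodup_roots_of_card_roots_toFinset_eq_natDegree {R : Type*} [CommRing R]
    [IsDomain R] [DecidableEq R] {p : R[X]} (h : p.roots.toFinset.card = p.natDegree) :
    p.roots.Nodup := by
  rw [← Multiset.toFinset_card_eq_card_iff_nodup]
  exact le_antisymm (Multiset.toFinset_card_le _) (h ▸ card_roots' p)

namespace Matrix

variable {m n K : Type*} [Fintype n] [Field K]

theorem rank_add_finrank_ker_mulVecLin (A : Matrix m n K) :
    A.rank + finrank K (LinearMap.ker A.mulVecLin) = Fintype.card n := by
  rw [rank, LinearMap.finrank_range_add_finrank_ker, finrank_fintype_fun_eq_card]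

theorem rank_lt_card_of_det_eq_zero [DecidableEq n] {A : Matrix n n K} (h : A.det = 0) :
    A.rank < Fintype.card n := by
  obtain ⟨v, hv0, hv⟩ := exists_mulVec_eq_zero_iff.mpr h
  have hker : 0 < finrank K (LinearMap.ker A.mulVecLin) :=
    finrank_pos_iff_exists_ne_zero.mpr ⟨⟨v, hv⟩, Subtype.coe_ne_coe.mp hv0⟩
  have := rank_add_finrank_ker_mulVecLin A
  omega

theorem finrank_ker_mulVecLin_le_rootMultiplicity_zero [DecidableEq n] (A : Matrix n n K) :
    finrank K (LinearMap.ker A.mulVecLin) ≤ A.charpoly.rootMultiplicity 0 := by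
  rw [← End.eigenspace_zero, ← charpoly_mulVecLin]
  exact LinearMap.finrank_eigenspace_le _ 0

theorem rank_mul_transpose_eq_of_finrank_ker_le_one [DecidableEq n] (A : Matrix n n K)
    (h : finrank K (LinearMap.ker (A * Aᵀ).mulVecLin) ≤ 1) : (A * Aᵀ).rank = A.rank := by
  by_cases hA : A.det = 0
  · have hA_lt := rank_lt_card_of_det_eq_zero hA
    have hAAt := rank_add_finrank_ker_mulVecLin (A * Aᵀ)
    have hle := rank_mul_le_left A Aᵀ
    omega
  · rw [rank_mul_eq_right_of_det_ne_zero A Aᵀ hA, rank_transpose]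

end Matrix

theorem stmt0 {n : ℕ} (C : Matrix (Fin n) (Fin n) ℂ)
    (h : (Matrix.charpoly (C * Cᵀ)).roots.toFinset.card = n) :
    (C * Cᵀ).rank = C.rank := by
  apply rank_mul_transpose_eq_of_finrank_ker_le_one
  have hnodup : (C * Cᵀ).charpoly.roots.Nodup :=
    nodup_roots_of_card_roots_toFinset_eq_natDegree (by simpa [charpoly_natDegree_eq_dim])
  calc finrank ℂ (LinearMap.ker (C * Cᵀ).mulVecLin)
      ≤ (C * Cᵀ).charpoly.rootMultiplicity 0 := finrank_ker_mulVecLin_le_rootMultiplicity_zero _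
    _ = (C * Cᵀ).charpoly.roots.count 0 := (count_roots _).symm
    _ ≤ 1 := Multiset.nodup_iff_count_le_one.mp hnodup 0
end

section
/- Let R₁, R₂ be matrices in SO(3,ℝ) such that R₁·C·R₂ᵀ is diagonal for every diagonal 3×3 real matrix C. Then R₁ and R₂ are signed permutation matrices with R₁ = E₁·P and R₂ = E₂·P for diagonal matrices E₁, E₂ with entries in {±1} and a common permutation matrix P. -/
/-!
Testing `R₁ C R₂ᵀ` against `C = diagonal (Pi.single k 1)` shows that `R₁ i k * R₂ j k = 0` whenever
`i ≠ j`. Since the columns of an orthogonal matrix are nonzero, the `k`-th columns of `R₁` and `R₂`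
are supported on one common row `r k`. Orthogonality of distinct columns makes `r` injective, hence a
permutation, and unit length of the columns makes the surviving entries `±1`.
-/

open Matrix

namespace Matrix

variable {K n : Type*} [CommRing K] [Fintype n]

theorem transpose_mul_self_apply_of_col_support {A : Matrix n n K} {r : n → n}
    (hr : ∀ k j, j ≠ r k → A j k = 0) (k k' : n) :
    (Aᵀ * A) k k' = A (r k) k * A (r k) k' := by
  rw [mul_apply]
  exact Finset.sum_eq_single (r k) (fun j _ hj => by simp [hr k j hj]) (by simp)

variable [DecidableEq n]

theorem mul_diagonal_single_mul_transpose_apply (A B : Matrix n n K) (k i j : n) :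
    (A * diagonal (Pi.single k 1 : n → K) * Bᵀ) i j = A i k * B j k := by
  simp [mul_apply, diagonal_apply, Pi.single_apply]

theorem mul_apply_mul_eq_zero_of_forall_isDiag {A B : Matrix n n K}
    (h : ∀ C : Matrix n n K, C.IsDiag → (A * C * Bᵀ).IsDiag) (k : n) {i j : n} (hij : i ≠ j) :
    A i k * B j k = 0 := by
  rw [← mul_diagonal_single_mul_transpose_apply]
  exact h _ (isDiag_diagonal _) hij

variable [IsDomain K]

theorem exists_apply_ne_zero_of_transpose_mul_self_eq_one {A : Matrix n n K}
    (hA : Aᵀ * A = 1) (k : n) : ∃ i, A i k ≠ 0 := by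
  by_contra! h0
  simpa [mul_apply, h0] using congr_fun (congr_fun hA k) k

theorem exists_common_col_support {A B : Matrix n n K} (hA : Aᵀ * A = 1) (hB : Bᵀ * B = 1)
    (h : ∀ C : Matrix n n K, C.IsDiag → (A * C * Bᵀ).IsDiag) :
    ∃ r : n → n, ∀ k j, j ≠ r k → A j k = 0 ∧ B j k = 0 := by
  have hcol : ∀ k, ∃ i, ∀ j, j ≠ i → A j k = 0 ∧ B j k = 0 := by
    intro k
    obtain ⟨i, hAi⟩ := exists_apply_ne_zero_of_transpose_mul_self_eq_one hA k
    have hB0 : ∀ j, j ≠ i → B j k = 0 := fun j hj =>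
      (mul_eq_zero.mp (mul_apply_mul_eq_zero_of_forall_isDiag h k hj.symm)).resolve_left hAi
    have hBi : B i k ≠ 0 := by
      obtain ⟨i', hBi'⟩ := exists_apply_ne_zero_of_transpose_mul_self_eq_one hB k
      obtain rfl : i' = i := by_contra fun hi' => hBi' (hB0 i' hi')
      exact hBi'
    exact ⟨i, fun j hj =>
      ⟨(mul_eq_zero.mp (mul_apply_mul_eq_zero_of_forall_isDiag h k hj)).resolve_right hBi,
        hB0 j hj⟩⟩
  choose r hr using hcol
  exact ⟨r, hr⟩

theorem injective_of_col_support {A : Matrix n n K} (hA : Aᵀ * A = 1) {r : n → n}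
    (hr : ∀ k j, j ≠ r k → A j k = 0) : Function.Injective r := by
  have hdiag : ∀ k, A (r k) k * A (r k) k = 1 := fun k => by
    rw [← transpose_mul_self_apply_of_col_support hr, hA, one_apply_eq]
  intro k k' hkk'
  by_contra hne
  have hoff := transpose_mul_self_apply_of_col_support hr k k'
  rw [hA, one_apply_ne hne, hkk'] at hoff
  have hk : A (r k') k ≠ 0 := hkk' ▸ left_ne_zero_of_mul_eq_one (hdiag k)
  exact mul_ne_zero hk (left_ne_zero_of_mul_eq_one (hdiag k')) hoff.symm

theorem exists_signed_perm_of_col_support {A : Matrix n n K} (hA : Aᵀ * A = 1)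
    (e : Equiv.Perm n) (he : ∀ k j, j ≠ e k → A j k = 0) :
    ∃ ε : n → K, (∀ i, ε i = 1 ∨ ε i = -1) ∧ A = diagonal ε * e⁻¹.permMatrix K := by
  refine ⟨fun i => A i (e⁻¹ i), fun i => ?_, ?_⟩
  · have hcol := transpose_mul_self_apply_of_col_support he (e⁻¹ i) (e⁻¹ i)
    rw [hA, one_apply_eq, Equiv.Perm.coe_inv, Equiv.apply_symm_apply] at hcol
    exact mul_self_eq_one_iff.mp hcol.symm
  · ext i j
    simp only [diagonal_mul, Equiv.Perm.permMatrix, PEquiv.toMatrix_apply, Equiv.toPEquiv_apply,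
      Option.mem_def, Option.some.injEq, Equiv.Perm.inv_eq_iff_eq]
    by_cases hij : i = e j
    · simp [hij]
    · simp [hij, he j i hij]

end Matrix

theorem stmt5_general (R₁ R₂ : Matrix (Fin 3) (Fin 3) ℝ)
    (h₁ : R₁ᵀ * R₁ = 1)
    (h₂ : R₂ᵀ * R₂ = 1)
    (h : ∀ C : Matrix (Fin 3) (Fin 3) ℝ, C.IsDiag → (R₁ * C * R₂ᵀ).IsDiag) :
    ∃ (ε₁ ε₂ : Fin 3 → ℝ) (σ : Equiv.Perm (Fin 3)),
      (∀ i, ε₁ i = 1 ∨ ε₁ i = -1) ∧ (∀ i, ε₂ i = 1 ∨ ε₂ i = -1) ∧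
      R₁ = Matrix.diagonal ε₁ * σ.permMatrix ℝ ∧
      R₂ = Matrix.diagonal ε₂ * σ.permMatrix ℝ := by
  obtain ⟨r, hr⟩ := exists_common_col_support h₁ h₂ h
  have hr₁ : ∀ k j, j ≠ r k → R₁ j k = 0 := fun k j hj => (hr k j hj).1
  set e := Equiv.ofBijective r (injective_of_col_support h₁ hr₁).bijective_of_finite
  obtain ⟨ε₁, hε₁, hR₁⟩ := exists_signed_perm_of_col_support h₁ e hr₁
  obtain ⟨ε₂, hε₂, hR₂⟩ := exists_signed_perm_of_col_support h₂ e fun k j hj => (hr k j hj).2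
  exact ⟨ε₁, ε₂, e⁻¹, hε₁, hε₂, hR₁, hR₂⟩

theorem stmt5 (R₁ R₂ : Matrix (Fin 3) (Fin 3) ℝ)
    (h₁ : R₁ᵀ * R₁ = 1) (hd₁ : R₁.det = 1)
    (h₂ : R₂ᵀ * R₂ = 1) (hd₂ : R₂.det = 1)
    (h : ∀ C : Matrix (Fin 3) (Fin 3) ℝ, C.IsDiag → (R₁ * C * R₂ᵀ).IsDiag) :
    ∃ (ε₁ ε₂ : Fin 3 → ℝ) (σ : Equiv.Perm (Fin 3)),
      (∀ i, ε₁ i = 1 ∨ ε₁ i = -1) ∧ (∀ i, ε₂ i = 1 ∨ ε₂ i = -1) ∧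
      R₁ = Matrix.diagonal ε₁ * σ.permMatrix ℝ ∧
      R₂ = Matrix.diagonal ε₂ * σ.permMatrix ℝ :=
  stmt5_general R₁ R₂ h₁ h₂ h
end

section
/- Let C₁, C₂ be diagonal 3×3 complex matrices such that C₂² has distinct diagonal entries, and suppose R₁·C₁·R₂ᵀ = C₂ for R₁, R₂ in SO(3,ℂ). Then R₁·C₁²·R₁ᵀ = C₂² and R₂·C₁²·R₂ᵀ = C₂², and consequently R₁ and R₂ are signed permutation matrices. -/
/-!
Transposing `R₁ C₁ R₂ᵀ = C₂` (diagonal matrices are symmetric) gives `R₂ C₁ R₁ᵀ = C₂`, and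
multiplying the two equations, in either order, collapses the middle `R₂ᵀ R₂` or `R₁ᵀ R₁`:
both `R₁` and `R₂` conjugate `C₁²` to `C₂²`. An orthogonal `R` with `R D Rᵀ = E`, `D` and `E`
diagonal, satisfies `R D = E R`, i.e. `R i j * D j j = E i i * R i j`. When the diagonal entries
of `E` are distinct, each column of `R` therefore has at most one nonzero entry, and
orthonormality of the columns forces that entry to be `±1` and the rows it occupies to be
pairwise different: `R` is a signed permutation matrix.
-/

open Matrix

/-- A complex signed permutation matrix: a product of a diagonal matrix with entries `±1`
and a permutation matrix. -/
def IsSignedPermC (R : Matrix (Fin 3) (Fin 3) ℂ) : Prop :=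
  ∃ (ε : Fin 3 → ℂ) (σ : Equiv.Perm (Fin 3)),
    (∀ i, ε i = 1 ∨ ε i = -1) ∧ R = Matrix.diagonal ε * σ.permMatrix ℂ

namespace Matrix

variable {n K : Type*} [Fintype n] [DecidableEq n]

theorem IsDiag.mul [NonUnitalNonAssocSemiring K] {A B : Matrix n n K} (hA : A.IsDiag)
    (hB : B.IsDiag) : (A * B).IsDiag := by
  rw [← hA.diagonal_diag, ← hB.diagonal_diag, diagonal_mul_diagonal]
  exact isDiag_diagonal _

section CommRing

variable [CommRing K]

theorem mul_self_mul_transpose_eq_of_mul_mul_transpose_eq {R₁ R₂ C C' : Matrix n n K}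
    (hR₂ : R₂ᵀ * R₂ = 1) (hC : C.IsSymm) (hC' : C'.IsSymm) (h : R₁ * C * R₂ᵀ = C') :
    R₁ * (C * C) * R₁ᵀ = C' * C' :=
  calc R₁ * (C * C) * R₁ᵀ = R₁ * C * (R₂ᵀ * R₂) * Cᵀ * R₁ᵀ := by
        rw [hR₂, hC.eq]; simp only [Matrix.mul_one, Matrix.mul_assoc]
    _ = C' * C'ᵀ := by rw [← h]; simp only [transpose_mul, transpose_transpose, Matrix.mul_assoc]
    _ = C' * C' := by rw [hC'.eq]

theorem apply_mul_diag_eq_of_mul_eq_mul {R D E : Matrix n n K} (hD : D.IsDiag) (hE : E.IsDiag)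
    (h : R * D = E * R) (i j : n) : R i j * D j j = E i i * R i j := by
  have := congr_fun₂ h i j
  rwa [← hD.diagonal_diag, ← hE.diagonal_diag, mul_diagonal, diagonal_mul] at this

end CommRing

section IsDomain

variable [CommRing K] [IsDomain K]

theorem exists_diagonal_mul_permMatrix_of_transpose_mul_self_eq_one {R : Matrix n n K}
    (hR : Rᵀ * R = 1) (hcol : ∀ i i' j, R i j ≠ 0 → R i' j ≠ 0 → i = i') :
    ∃ (ε : n → K) (σ : Equiv.Perm n),
      (∀ i, ε i = 1 ∨ ε i = -1) ∧ R = diagonal ε * σ.permMatrix K := by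
  have hdot : ∀ j j', ∑ i, R i j * R i j' = (1 : Matrix n n K) j j' := fun j j' => by
    simpa [mul_apply] using congr_fun₂ hR j j'
  have hnz : ∀ j, ∃ i, R i j ≠ 0 := fun j => by
    by_contra! h0
    simpa [h0] using hdot j j
  choose τ hτ using hnz
  have hzero : ∀ i j, i ≠ τ j → R i j = 0 := fun i j hi => by
    by_contra hij
    exact hi (hcol _ _ _ hij (hτ j))
  have hdot_col : ∀ j j', R (τ j) j * R (τ j) j' = (1 : Matrix n n K) j j' := fun j j' => by
    rw [← hdot, Finset.sum_eq_single (τ j) (fun i _ hi => by rw [hzero i j hi, zero_mul])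
      (by simp)]
  have hinj : Function.Injective τ := fun j j' hjj => by
    by_contra hne
    have := hdot_col j j'
    rw [one_apply_ne hne, hjj] at this
    exact mul_ne_zero (hjj ▸ hτ j) (hτ j') this
  let e := Equiv.ofBijective τ hinj.bijective_of_finite
  have he : ∀ i, τ (e.symm i) = i := e.apply_symm_apply
  refine ⟨fun i => R i (e.symm i), e.symm, fun i => ?_, ?_⟩
  · exact mul_self_eq_one_iff.mp (by simpa [he] using hdot_col (e.symm i) (e.symm i))
  · ext i j
    by_cases hij : e.symm i = j
    · subst hij
      simp [PEquiv.toMatrix_apply]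
    · rw [hzero i j (fun h => hij (by rw [h]; exact e.symm_apply_apply j))]
      simp [PEquiv.toMatrix_apply, hij]

theorem exists_diagonal_mul_permMatrix_of_mul_mul_transpose_eq {R D E : Matrix n n K}
    (hR : Rᵀ * R = 1) (hD : D.IsDiag) (hE : E.IsDiag) (hE_inj : Function.Injective E.diag)
    (h : R * D * Rᵀ = E) :
    ∃ (ε : n → K) (σ : Equiv.Perm n),
      (∀ i, ε i = 1 ∨ ε i = -1) ∧ R = diagonal ε * σ.permMatrix K := by
  have hRD : R * D = E * R := by rw [← h, Matrix.mul_assoc _ Rᵀ, hR, Matrix.mul_one]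
  have hentry : ∀ i j, R i j ≠ 0 → E i i = D j j := fun i j hij =>
    mul_left_cancel₀ hij (by rw [mul_comm, ← apply_mul_diag_eq_of_mul_eq_mul hD hE hRD])
  exact exists_diagonal_mul_permMatrix_of_transpose_mul_self_eq_one hR fun i i' j hi hi' =>
    hE_inj ((hentry i j hi).trans (hentry i' j hi').symm)

end IsDomain

end Matrix

theorem stmt7_general (C₁ C₂ R₁ R₂ : Matrix (Fin 3) (Fin 3) ℂ)
    (hC₁ : C₁.IsDiag) (hC₂ : C₂.IsDiag)
    (hdist : ∀ i j : Fin 3, i ≠ j → (C₂ * C₂) i i ≠ (C₂ * C₂) j j)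
    (hR₁ : R₁ * R₁ᵀ = 1)
    (hR₂ : R₂ * R₂ᵀ = 1)
    (h : R₁ * C₁ * R₂ᵀ = C₂) :
    R₁ * (C₁ * C₁) * R₁ᵀ = C₂ * C₂ ∧
    R₂ * (C₁ * C₁) * R₂ᵀ = C₂ * C₂ ∧
    IsSignedPermC R₁ ∧ IsSignedPermC R₂ := by
  have hR₁' : R₁ᵀ * R₁ = 1 := mul_eq_one_comm.mp hR₁
  have hR₂' : R₂ᵀ * R₂ = 1 := mul_eq_one_comm.mp hR₂
  have hT : R₂ * C₁ * R₁ᵀ = C₂ := by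
    simpa [Matrix.mul_assoc, hC₁.isSymm.eq, hC₂.isSymm.eq] using congrArg transpose h
  have h₁ := mul_self_mul_transpose_eq_of_mul_mul_transpose_eq hR₂' hC₁.isSymm hC₂.isSymm h
  have h₂ := mul_self_mul_transpose_eq_of_mul_mul_transpose_eq hR₁' hC₁.isSymm hC₂.isSymm hT
  have hinj : Function.Injective (C₂ * C₂).diag := fun i j hij =>
    by_contra fun hne => hdist i j hne hij
  exact ⟨h₁, h₂,
    exists_diagonal_mul_permMatrix_of_mul_mul_transpose_eq hR₁' (hC₁.mul hC₁) (hC₂.mul hC₂)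
      hinj h₁,
    exists_diagonal_mul_permMatrix_of_mul_mul_transpose_eq hR₂' (hC₁.mul hC₁) (hC₂.mul hC₂)
      hinj h₂⟩

theorem stmt7 (C₁ C₂ R₁ R₂ : Matrix (Fin 3) (Fin 3) ℂ)
    (hC₁ : C₁.IsDiag) (hC₂ : C₂.IsDiag)
    (hdist : ∀ i j : Fin 3, i ≠ j → (C₂ * C₂) i i ≠ (C₂ * C₂) j j)
    (hR₁ : R₁ * R₁ᵀ = 1) (hdR₁ : R₁.det = 1)
    (hR₂ : R₂ * R₂ᵀ = 1) (hdR₂ : R₂.det = 1)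
    (h : R₁ * C₁ * R₂ᵀ = C₂) :
    R₁ * (C₁ * C₁) * R₁ᵀ = C₂ * C₂ ∧
    R₂ * (C₁ * C₁) * R₂ᵀ = C₂ * C₂ ∧
    IsSignedPermC R₁ ∧ IsSignedPermC R₂ :=
  stmt7_general C₁ C₂ R₁ R₂ hC₁ hC₂ hdist hR₁ hR₂ h
end

section
/- The functions t₂(C) = tr(C·Cᵀ), t₃(C) = det(C), t₄(C) = tr((C·Cᵀ)²) on the space of 3×3 real matrices are algebraically independent over ℝ. -/
/-!
On diagonal matrices `diag(x, y, z)` the functions `t₂, t₃, t₄` become `x² + y² + z²`, `xyz` and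
`x⁴ + y⁴ + z⁴`, so it suffices that these three polynomials are algebraically independent.
A polynomial relation among them vanishes on the image of `(x, y, z) ↦ (p, d, q)` over an
algebraically closed field, and this map is onto: choose `x, t` with `x t = d` and
`x⁴ + (p - x²)² - 2 t² = q` (a root of a sextic in `x`), then `y, z` with `y² + z² = p - x²`
and `y z = t`.
-/

open Matrix

open MvPolynomial in
theorem algebraicIndependent_of_surjective_aeval {R L σ ι : Type*} [CommRing R] [CommRing L]
    [IsDomain L] [Infinite L] [Algebra R L] (hRL : Function.Injective (algebraMap R L))
    (f : ι → MvPolynomial σ R)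
    (hf : Function.Surjective fun (v : σ → L) (i : ι) => aeval v (f i)) :
    AlgebraicIndependent R f := by
  rw [algebraicIndependent_iff_injective_aeval, injective_iff_map_eq_zero]
  intro P hP
  apply map_injective _ hRL
  refine MvPolynomial.funext fun w => ?_
  obtain ⟨v, rfl⟩ := hf w
  simp [eval_map, ← aeval_def, ← aeval_bind₁, ← aeval_eq_bind₁, hP]

section IsAlgClosed

variable {k : Type*} [Field k] [IsAlgClosed k]

theorem exists_sq_add_sq_eq_and_mul_eq (h2 : (2 : k) ≠ 0) (s t : k) :
    ∃ y z : k, y ^ 2 + z ^ 2 = s ∧ y * z = t := by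
  obtain ⟨a, ha⟩ := IsAlgClosed.exists_pow_nat_eq (s + 2 * t) two_pos
  obtain ⟨b, hb⟩ := IsAlgClosed.exists_pow_nat_eq (s - 2 * t) two_pos
  refine ⟨(a + b) / 2, (a - b) / 2, ?_, ?_⟩
  · field_simp
    linear_combination 2 * ha + 2 * hb
  · field_simp
    linear_combination ha - hb

open Polynomial in
theorem exists_mul_eq_and_pow_four_add_sq_sub_sq_eq (h2 : (2 : k) ≠ 0) (p d q : k) :
    ∃ x t : k, x * t = d ∧ x ^ 4 + (p - x ^ 2) ^ 2 - 2 * t ^ 2 = q := by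
  by_cases hd : d = 0
  · obtain ⟨t, ht⟩ := IsAlgClosed.exists_pow_nat_eq ((p ^ 2 - q) / 2) two_pos
    refine ⟨0, t, by simp [hd], ?_⟩
    rw [ht]
    field_simp
    ring
  -- with `t = d / x`, the second equation reads `2 S(x) / x ^ 2 = 0` for the sextic `S` below
  have hdeg : (X ^ 6 - C p * X ^ 4 + C ((p ^ 2 - q) / 2) * X ^ 2 - C (d ^ 2) : k[X]).degree = 6 := by
    compute_degree!
  obtain ⟨x, hroot⟩ := IsAlgClosed.exists_root _ (by rw [hdeg]; decide)
  have hx : 2 * x ^ 6 - 2 * p * x ^ 4 + (p ^ 2 - q) * x ^ 2 - 2 * d ^ 2 = 0 := by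
    simp only [IsRoot, eval_sub, eval_add, eval_mul, eval_pow, eval_X, eval_C] at hroot
    field_simp at hroot
    linear_combination hroot
  have hx0 : x ≠ 0 := by
    rintro rfl
    simp_all
  refine ⟨x, d / x, by field_simp, ?_⟩
  field_simp
  linear_combination hx

theorem surjective_sum_sq_prod_sum_pow_four (h2 : (2 : k) ≠ 0) :
    Function.Surjective fun v : Fin 3 → k => ![∑ i, v i ^ 2, ∏ i, v i, ∑ i, v i ^ 4] := by
  intro w
  obtain ⟨x, t, hxt, hq⟩ := exists_mul_eq_and_pow_four_add_sq_sub_sq_eq h2 (w 0) (w 1) (w 2)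
  obtain ⟨y, z, hs, hp⟩ := exists_sq_add_sq_eq_and_mul_eq h2 (w 0 - x ^ 2) t
  refine ⟨![x, y, z], funext fun i => ?_⟩
  fin_cases i <;> simp only [Fin.sum_univ_three, Fin.prod_univ_three] <;> simp
  · linear_combination hs
  · linear_combination x * hp + hxt
  · linear_combination (y ^ 2 + z ^ 2 + (w 0 - x ^ 2)) * hs - 2 * (y * z + t) * hp + hq

end IsAlgClosed

open MvPolynomial in
theorem algebraicIndependent_psum_two_prod_psum_four {R : Type*} [CommRing R] [IsDomain R]
    (h2 : (2 : R) ≠ 0) :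
    AlgebraicIndependent R ![psum (Fin 3) R 2, ∏ i, X i, psum (Fin 3) R 4] := by
  let L := AlgebraicClosure (FractionRing R)
  have hinj : Function.Injective (algebraMap R L) := by
    rw [IsScalarTower.algebraMap_eq R (FractionRing R) L]
    exact (algebraMap (FractionRing R) L).injective.comp (IsFractionRing.injective R _)
  have h2' : (2 : L) ≠ 0 := by
    rw [← map_ofNat (algebraMap R L) 2]
    exact hinj.ne_iff' (map_zero _) |>.mpr h2
  refine algebraicIndependent_of_surjective_aeval hinj _ ?_
  convert surjective_sum_sq_prod_sum_pow_four h2' using 3 with v i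
  fin_cases i <;> simp [psum]

open MvPolynomial in
theorem algebraicIndependent_sum_sq_prod_sum_pow_four {R : Type*} [CommRing R] [IsDomain R]
    [Infinite R] (h2 : (2 : R) ≠ 0) :
    AlgebraicIndependent R
      ![fun v : Fin 3 → R => ∑ i, v i ^ 2, fun v => ∏ i, v i, fun v => ∑ i, v i ^ 4] := by
  let toFun : MvPolynomial (Fin 3) R →ₐ[R] (Fin 3 → R) → R := AlgHom.pi fun v => aeval v
  have htoFun : Function.Injective toFun := fun P Q h => funext fun v => congrFun h v
  convert (algebraicIndependent_psum_two_prod_psum_four h2).map' htoFun using 1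
  funext i v
  fin_cases i <;> simp [toFun, psum]

theorem stmt12 :
    AlgebraicIndependent ℝ
      (![fun C : Matrix (Fin 3) (Fin 3) ℝ => Matrix.trace (C * Cᵀ),
         fun C : Matrix (Fin 3) (Fin 3) ℝ => C.det,
         fun C : Matrix (Fin 3) (Fin 3) ℝ => Matrix.trace ((C * Cᵀ) ^ 2)] :
        Fin 3 → (Matrix (Fin 3) (Fin 3) ℝ → ℝ)) := by
  let restrictToDiagonal : (Matrix (Fin 3) (Fin 3) ℝ → ℝ) →ₐ[ℝ] (Fin 3 → ℝ) → ℝ :=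
    AlgHom.pi fun v => Pi.evalAlgHom ℝ _ (diagonal v)
  refine .of_comp restrictToDiagonal ?_
  convert algebraicIndependent_sum_sq_prod_sum_pow_four (R := ℝ) two_ne_zero using 1
  funext i v
  fin_cases i <;>
    simp [restrictToDiagonal, diagonal_pow, trace_diagonal, det_diagonal, ← sq, ← pow_mul]
end
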